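/- arXiv:2208.09731 — 7 statements merged into one kernel-verified Lean document; each statement's English description precedes it below -/
import Mathlib

section
/- Let G be a directed graph on vertex set V, A a matrix over a field F whose off-diagonal support pattern matches the edges of G, and Z a zero forcing set of G. If x is in the kernel of A and x restricted to Z is the zero vector, then x = 0. -/
open Matrix

section ZeroForcing

variable {V : Type*}

/-- The blue-coloring closure of the zero forcing process on a directed graph with
edge relation `E`, starting from the initially blue set `Z`:  a blue vertex `u` all of
whose out-neighbors except `v` are already blue forces `v` to become blue. -/
inductive Blue (E : V → V → Prop) (Z : Set V) : V → Prop
  | init {v : V} : v ∈ Z → Blue E Z v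
  | force {u v : V} : Blue E Z u → E u v →
      (∀ w, E u w → w ≠ v → Blue E Z w) → Blue E Z v

/-- `Z` is a zero forcing set if the forcing process colors every vertex blue. -/
def IsZeroForcingSet (E : V → V → Prop) (Z : Set V) : Prop := ∀ v, Blue E Z v

end ZeroForcing

section ForcingAlg

variable {F : Type*} [Field F] {n : ℕ}

/-- The off-diagonal adjacency pattern of a matrix: `u → v` iff `u ≠ v` and `A u v ≠ 0`. -/
def adjOf (A : Matrix (Fin n) (Fin n) F) (u v : Fin n) : Prop := u ≠ v ∧ A u v ≠ 0

/-- A chronological list of forces for the zero forcing set `Z` of `A`:  `π` lists the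
vertices outside `Z` in the order they are forced, and `par u` is the forcing parent of
`u` (the vertex that forces `u`). -/
structure ForcingOrder (A : Matrix (Fin n) (Fin n) F) (Z : Finset (Fin n)) where
  π : List (Fin n)
  par : Fin n → Fin n
  nodup : π.Nodup
  mem_iff : ∀ v, v ∈ π ↔ v ∉ Z
  par_ne_self : ∀ u ∈ π, par u ≠ u
  par_edge : ∀ u ∈ π, A (par u) u ≠ 0
  par_blue : ∀ u ∈ π, par u ∈ Z ∨ (par u ∈ π ∧ π.idxOf (par u) < π.idxOf u)
  others_blue : ∀ u ∈ π, ∀ w, w ≠ par u → w ≠ u → A (par u) w ≠ 0 →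
      (w ∈ Z ∨ (w ∈ π ∧ π.idxOf w < π.idxOf u))
  par_inj : ∀ u ∈ π, ∀ v ∈ π, par u = par v → u = v

/-- One step of the forcing algorithm: `x_u ← (b_{u↑} − A_{u↑,*} x) / A_{u↑,u}`. -/
def forcingStep (A : Matrix (Fin n) (Fin n) F) (par : Fin n → Fin n)
    (b : Fin n → F) (x : Fin n → F) (u : Fin n) : Fin n → F :=
  Function.update x u ((b (par u) - A (par u) ⬝ᵥ x) / A (par u) u)

/-- The forcing algorithm `Forcing(A, Z, b)`: starting from `x = 0`, iterate the forcing
update over the vertices outside `Z` in forcing order. -/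
def Forcing (A : Matrix (Fin n) (Fin n) F) {Z : Finset (Fin n)}
    (fo : ForcingOrder A Z) (b : Fin n → F) : Fin n → F :=
  fo.π.foldl (forcingStep A fo.par b) 0

/-- The map `R(b) = b − A · Forcing(A, Z, b)`. -/
def Rmap (A : Matrix (Fin n) (Fin n) F) {Z : Finset (Fin n)}
    (fo : ForcingOrder A Z) (b : Fin n → F) : Fin n → F :=
  b - A.mulVec (Forcing A fo b)

/-- A vertex is a terminal if it has no forcing child. -/
def IsTerminal {A : Matrix (Fin n) (Fin n) F} {Z : Finset (Fin n)}
    (fo : ForcingOrder A Z) (v : Fin n) : Prop :=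
  ∀ u ∈ fo.π, fo.par u ≠ v

instance {A : Matrix (Fin n) (Fin n) F} {Z : Finset (Fin n)} (fo : ForcingOrder A Z) :
    DecidablePred (IsTerminal fo) := fun v =>
  decidable_of_iff (∀ u ∈ fo.π, fo.par u ≠ v) Iff.rfl

/-- The core matrix `B = (R A)_{T,Z}`: its column indexed by `z ∈ Z` is `(R a_z)_T`,
where `a_z` is the `z`-th column of `A` and `T` is the terminal set. -/
def coreMatrix (A : Matrix (Fin n) (Fin n) F) {Z : Finset (Fin n)}
    (fo : ForcingOrder A Z) :
    Matrix {v // IsTerminal fo v} {v // v ∈ Z} F :=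
  Matrix.of fun t z => Rmap A fo (fun i => A i z.1) t.1

end ForcingAlg

section KernelVanishing

variable {V R : Type*} [Fintype V] [NonUnitalNonAssocSemiring R] [NoZeroDivisors R]
  {A : Matrix V V R} {x : V → R}

theorem Matrix.eq_zero_of_mulVec_apply_eq_zero {u v : V} (hu : (A *ᵥ x) u = 0)
    (hv : A u v ≠ 0) (hrow : ∀ w ≠ v, A u w * x w = 0) : x v = 0 := by
  rw [mulVec, dotProduct, Fintype.sum_eq_single v hrow] at hu
  exact (mul_eq_zero.mp hu).resolve_left hv

/-- When `u` forces `v`, row `u` of `A *ᵥ x = 0` reduces to `A u v * x v = 0`: the other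
terms vanish because `x` is zero on blue vertices and `A u w = 0` off the edges of `u`. -/
theorem Blue.eq_zero_of_mulVec_eq_zero {E : V → V → Prop} {Z : Set V}
    (hA : ∀ u v : V, u ≠ v → (A u v ≠ 0 ↔ E u v)) (hker : A *ᵥ x = 0)
    (hxZ : ∀ v ∈ Z, x v = 0) {v : V} (hv : Blue E Z v) : x v = 0 := by
  induction hv with
  | init hvZ => exact hxZ _ hvZ
  | @force u v _ huv _ ihu ihw =>
    obtain rfl | hne := eq_or_ne u v
    · exact ihu
    refine eq_zero_of_mulVec_apply_eq_zero (congrFun hker u) ((hA u v hne).mpr huv)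
      fun w hwv => ?_
    obtain rfl | hwu := eq_or_ne w u
    · rw [ihu, mul_zero]
    by_cases h0 : A u w = 0
    · rw [h0, zero_mul]
    · rw [ihw w ((hA u w hwu.symm).mp h0) hwv, mul_zero]

end KernelVanishing

theorem stmt0_general {V : Type*} [Fintype V] {F : Type*} [Field F]
    (E : V → V → Prop) (A : Matrix V V F)
    (hA : ∀ u v : V, u ≠ v → (A u v ≠ 0 ↔ E u v))
    (Z : Set V) (hZ : IsZeroForcingSet E Z)
    (x : V → F) (hker : A.mulVec x = 0) (hxZ : ∀ v ∈ Z, x v = 0) :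
    x = 0 :=
  funext fun v => (hZ v).eq_zero_of_mulVec_eq_zero hA hker hxZ

/-- If `A`'s off-diagonal support matches the edges of `G`, `Z` is a zero
forcing set of `G`, `x ∈ ker A` and `x` vanishes on `Z`, then `x = 0`. -/
theorem stmt0 {V : Type*} [Fintype V] [DecidableEq V] {F : Type*} [Field F]
    (E : V → V → Prop) (A : Matrix V V F)
    (hA : ∀ u v : V, u ≠ v → (A u v ≠ 0 ↔ E u v))
    (Z : Set V) (hZ : IsZeroForcingSet E Z)
    (x : V → F) (hker : A.mulVec x = 0) (hxZ : ∀ v ∈ Z, x v = 0) :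
    x = 0 :=
  stmt0_general E A hA Z hZ x hker hxZ
end

section
/- Let Z be a zero forcing set of a matrix A ∈ F^{n×n} over a field F. Then the columns of A indexed by vertices not in Z are linearly independent. -/
open Matrix

/-! If `A *ᵥ x = 0` and `x` vanishes on `Z`, then `x` vanishes on every blue vertex: when `u`
forces `v`, row `u` of `A *ᵥ x = 0` reduces to `A u v * x v = 0` with `A u v ≠ 0`. A vanishing
combination of the columns outside `Z` is such an `x`. -/

theorem Blue.apply_eq_zero_of_mulVec_eq_zero {F : Type*} [Field F] {n : ℕ}
    {A : Matrix (Fin n) (Fin n) F} {Z : Set (Fin n)} {x : Fin n → F} (hx : A *ᵥ x = 0)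
    (hxZ : ∀ v ∈ Z, x v = 0) {v : Fin n} (hv : Blue (adjOf A) Z v) : x v = 0 := by
  induction hv with
  | init hvZ => exact hxZ _ hvZ
  | @force u v _ huv _ hu_zero hothers_zero =>
    have hrow : (A *ᵥ x) u = A u v * x v := by
      rw [mulVec, dotProduct, Finset.sum_eq_single v]
      · intro w _ hwv
        by_cases hwu : w = u
        · rw [hwu, hu_zero, mul_zero]
        by_cases hAw : A u w = 0
        · rw [hAw, zero_mul]
        rw [hothers_zero w ⟨Ne.symm hwu, hAw⟩ hwv, mul_zero]
      · exact fun hv => absurd (Finset.mem_univ v) hv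
    rw [hx, Pi.zero_apply, eq_comm, mul_eq_zero] at hrow
    exact hrow.resolve_left huv.2

theorem IsZeroForcingSet.eq_zero_of_mulVec_eq_zero {F : Type*} [Field F] {n : ℕ}
    {A : Matrix (Fin n) (Fin n) F} {Z : Set (Fin n)} (hZ : IsZeroForcingSet (adjOf A) Z)
    {x : Fin n → F} (hx : A *ᵥ x = 0) (hxZ : ∀ v ∈ Z, x v = 0) : x = 0 :=
  funext fun v => (hZ v).apply_eq_zero_of_mulVec_eq_zero hx hxZ

/-- if `Z` is a zero forcing set of `A`, the columns of `A` indexed by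
vertices outside `Z` are linearly independent. -/
theorem stmt1 {F : Type*} [Field F] {n : ℕ} (A : Matrix (Fin n) (Fin n) F)
    (Z : Finset (Fin n)) (hZ : IsZeroForcingSet (adjOf A) ↑Z) :
    LinearIndependent F (fun v : {v : Fin n // v ∉ Z} => (fun i => A i v.1)) := by
  rw [Fintype.linearIndependent_iff]
  intro g hg v
  let x : Fin n → F := fun i => if h : i ∈ Z then 0 else g ⟨i, h⟩
  have hAx : A *ᵥ x = ∑ w, g w • fun i => A i w.1 := by
    ext j
    rw [mulVec, dotProduct, ← Fintype.sum_subtype_add_sum_subtype (· ∈ Z)]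
    simp only [x, Finset.sum_apply, Pi.smul_apply, smul_eq_mul, dif_pos, Subtype.prop, mul_zero,
      Finset.sum_const_zero, zero_add]
    exact Finset.sum_congr rfl fun w _ => by rw [dif_neg w.2, mul_comm]
  have hx : x = 0 :=
    hZ.eq_zero_of_mulVec_eq_zero (hAx.trans hg) fun w hw => dif_pos (Finset.mem_coe.mp hw)
  simpa [x, v.2] using congrFun hx v.1
end

section
/- Let Z be a zero forcing set of A ∈ F^{n×n} with forcing order π, in which each vertex u outside Z is forced by a unique forcing parent u↑. Define the Forcing algorithm: initialize x = 0; for each u ∈ V∖Z in forcing order, set x_u ← (b_{u↑} − A_{u↑,*} x) / A_{u↑,u}. Then after x_u is updated, for every vertex v with v ≤_π u we have A_{v↑,*} x = b_{v↑}. In particular, if Ax = b has a solution x with x_Z = 0, then the Forcing algorithm with input b computes that solution. -/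
open Matrix

/-!
Processing `u = π[k]` changes only the coordinate `x_u`, and `u` is not an out-neighbour of
`v↑` for any earlier `v`: otherwise `u` would have had to be blue before `v↑` forced `v`.
Hence the rows `A_{v↑,*}` already satisfied stay satisfied, while the new row `A_{u↑,*}`
is satisfied by the choice of `x_u` (as `x_u` was still `0`). For the second claim, the
difference `y` of the output and a solution vanishes on `Z` and on every row `A_{v↑,*}`;
along `π` the row `A_{u↑,*}` meets `y` only in `y_u`, so `y = 0`, which is the usual
uniqueness argument for zero forcing sets.
-/

theorem Matrix.dotProduct_update {m α : Type*} [Fintype m] [DecidableEq m]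
    [NonUnitalNonAssocRing α] (r y : m → α) (u : m) (c : α) :
    r ⬝ᵥ Function.update y u c = r ⬝ᵥ y - r u * y u + r u * c := by
  rw [Pi.update_eq_sub_add_single, dotProduct_add, dotProduct_sub, dotProduct_single,
    dotProduct_single]

section

variable {F : Type*} [Field F] {n : ℕ}

theorem foldl_forcingStep_apply_of_notMem (A : Matrix (Fin n) (Fin n) F)
    (par : Fin n → Fin n) (b : Fin n → F) {w : Fin n} :
    ∀ {l : List (Fin n)} (x : Fin n → F), w ∉ l → l.foldl (forcingStep A par b) x w = x w
  | [], _, _ => rfl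
  | u :: l, x, hw => by
    rw [List.mem_cons, not_or] at hw
    rw [List.foldl_cons, foldl_forcingStep_apply_of_notMem A par b _ hw.2, forcingStep,
      Function.update_of_ne hw.1]

namespace ForcingOrder

variable {A : Matrix (Fin n) (Fin n) F} {Z : Finset (Fin n)} (fo : ForcingOrder A Z)

theorem mem_or_idxOf_lt_of_apply_par_ne_zero {v w : Fin n} (hv : v ∈ fo.π) (hwv : w ≠ v)
    (hA : A (fo.par v) w ≠ 0) : w ∈ Z ∨ (w ∈ fo.π ∧ fo.π.idxOf w < fo.π.idxOf v) := by
  by_cases hw : w = fo.par v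
  · exact hw ▸ fo.par_blue v hv
  · exact fo.others_blue v hv w hw hwv hA

variable {fo} {l : List (Fin n)} {u : Fin n}

theorem mem_π_of_prefix (h : l ++ [u] <+: fo.π) : u ∈ fo.π :=
  h.subset (List.mem_append_right l (List.mem_singleton_self u))

theorem notMem_of_prefix (h : l ++ [u] <+: fo.π) : u ∉ l := by
  have hnd := fo.nodup.sublist h.sublist
  rw [List.nodup_append] at hnd
  exact fun hul => hnd.2.2 u hul u (List.mem_singleton_self u) rfl

theorem idxOf_eq_length_of_prefix (h : l ++ [u] <+: fo.π) : fo.π.idxOf u = l.length := by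
  have hlt := (h.mem_iff_idxOf_lt_length u).1 (by simp)
  have hge := mt ((List.prefix_append l [u]).trans h |>.mem_iff_idxOf_lt_length u).2
    (notMem_of_prefix h)
  simp only [List.length_append, List.length_singleton] at hlt
  omega

theorem mem_or_mem_of_apply_par_ne_zero (h : l ++ [u] <+: fo.π) {w : Fin n} (hwu : w ≠ u)
    (hA : A (fo.par u) w ≠ 0) : w ∈ Z ∨ w ∈ l := by
  rw [((List.prefix_append l [u]).trans h).mem_iff_idxOf_lt_length,
    ← idxOf_eq_length_of_prefix h]
  exact (fo.mem_or_idxOf_lt_of_apply_par_ne_zero (mem_π_of_prefix h) hwu hA).imp_right And.right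

theorem apply_par_eq_zero_of_prefix (h : l ++ [u] <+: fo.π) {v : Fin n} (hv : v ∈ l) :
    A (fo.par v) u = 0 := by
  have hl := (List.prefix_append l [u]).trans h
  have hvu : fo.π.idxOf v < fo.π.idxOf u :=
    idxOf_eq_length_of_prefix h ▸ (hl.mem_iff_idxOf_lt_length v).1 hv
  by_contra hA
  rcases fo.mem_or_idxOf_lt_of_apply_par_ne_zero (hl.subset hv) (by rintro rfl; omega) hA
    with hZ | ⟨-, hlt⟩
  · exact (fo.mem_iff u).1 (mem_π_of_prefix h) hZ
  · omega

theorem dotProduct_par_foldl_of_prefix (b : Fin n → F) {l : List (Fin n)} (hl : l <+: fo.π) :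
    ∀ v ∈ l, A (fo.par v) ⬝ᵥ l.foldl (forcingStep A fo.par b) 0 = b (fo.par v) := by
  induction l using List.reverseRecOn with
  | nil => simp
  | append_singleton l u ih =>
    have hxu : l.foldl (forcingStep A fo.par b) 0 u = 0 :=
      foldl_forcingStep_apply_of_notMem A fo.par b 0 (notMem_of_prefix hl)
    intro v hv
    rw [List.foldl_concat, forcingStep, dotProduct_update, hxu, mul_zero, sub_zero]
    rcases List.mem_append.1 hv with hv | hv
    · rw [apply_par_eq_zero_of_prefix hl hv, zero_mul, add_zero]
      exact ih ((List.prefix_append l [u]).trans hl) v hv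
    · rw [List.mem_singleton.1 hv, mul_div_cancel₀ _ (fo.par_edge u (mem_π_of_prefix hl))]
      ring

theorem eq_zero_of_dotProduct_par_eq_zero {y : Fin n → F} (hZ : ∀ i ∈ Z, y i = 0)
    (hπ : ∀ v ∈ fo.π, A (fo.par v) ⬝ᵥ y = 0) : y = 0 := by
  suffices h : ∀ l, l <+: fo.π → ∀ w ∈ l, y w = 0 by
    funext w
    by_cases hw : w ∈ Z
    · exact hZ w hw
    · exact h fo.π List.prefix_rfl w ((fo.mem_iff w).2 hw)
  intro l hl
  induction l using List.reverseRecOn with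
  | nil => simp
  | append_singleton l u ih =>
    have hy : ∀ w ∈ l, y w = 0 := ih ((List.prefix_append l [u]).trans hl)
    have hrow : A (fo.par u) ⬝ᵥ y = A (fo.par u) u * y u := by
      refine Finset.sum_eq_single u (fun w _ hwu => ?_) (by simp)
      by_cases hA : A (fo.par u) w = 0
      · rw [hA, zero_mul]
      · rcases mem_or_mem_of_apply_par_ne_zero hl hwu hA with hw | hw
        · rw [hZ w hw, mul_zero]
        · rw [hy w hw, mul_zero]
    have hyu : y u = 0 := by
      have := hπ u (mem_π_of_prefix hl)
      rw [hrow] at this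
      exact (mul_eq_zero.1 this).resolve_left (fo.par_edge u (mem_π_of_prefix hl))
    intro w hw
    rcases List.mem_append.1 hw with hw | hw
    · exact hy w hw
    · exact List.mem_singleton.1 hw ▸ hyu

end ForcingOrder

end

theorem stmt3_general {F : Type*} [Field F] {n : ℕ} (A : Matrix (Fin n) (Fin n) F)
    (Z : Finset (Fin n))
    (fo : ForcingOrder A Z) (b : Fin n → F) :
    (∀ k : ℕ, ∀ v ∈ fo.π.take k,
        A (fo.par v) ⬝ᵥ ((fo.π.take k).foldl (forcingStep A fo.par b) 0)
          = b (fo.par v)) ∧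
    (∀ x : Fin n → F, A.mulVec x = b → (∀ i ∈ Z, x i = 0) → Forcing A fo b = x) := by
  refine ⟨fun k => fo.dotProduct_par_foldl_of_prefix b (List.take_prefix k fo.π),
    fun x hx hxZ => ?_⟩
  rw [← sub_eq_zero]
  refine fo.eq_zero_of_dotProduct_par_eq_zero (fun i hi => ?_) (fun v hv => ?_)
  · rw [Pi.sub_apply, hxZ i hi, sub_zero]
    exact foldl_forcingStep_apply_of_notMem A fo.par b 0 fun hiπ => (fo.mem_iff i).1 hiπ hi
  · rw [dotProduct_sub, Forcing, fo.dotProduct_par_foldl_of_prefix b List.prefix_rfl v hv,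
      ← mulVec, hx, sub_self]

/-- in the forcing algorithm, after `x_u` has been updated (i.e. after
processing any prefix of the forcing order `π`), every vertex `v` processed so far
satisfies `A_{v↑,*} x = b_{v↑}`.  In particular if `A x = b` has a solution with
`x_Z = 0`, then `Forcing(A, Z, b)` computes that solution. -/
theorem stmt3 {F : Type*} [Field F] {n : ℕ} (A : Matrix (Fin n) (Fin n) F)
    (Z : Finset (Fin n)) (hZ : IsZeroForcingSet (adjOf A) ↑Z)
    (fo : ForcingOrder A Z) (b : Fin n → F) :
    (∀ k : ℕ, ∀ v ∈ fo.π.take k,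
        A (fo.par v) ⬝ᵥ ((fo.π.take k).foldl (forcingStep A fo.par b) 0)
          = b (fo.par v)) ∧
    (∀ x : Fin n → F, A.mulVec x = b → (∀ i ∈ Z, x i = 0) → Forcing A fo b = x) :=
  stmt3_general A Z fo b
end

section
/- Let Z be a zero forcing set of A ∈ F^{n×n}, b ∈ F^n, and x' ∈ F^n with support contained in Z. If Ax = b for some x with x_Z = x'_Z, then x = Forcing(A, Z, b − Ax') + x', where Forcing is the forcing algorithm that produces the unique solution vanishing on Z of the system restricted along the forcing order. -/
/-!
Row `u↑` of `A y = c` involves, besides `y_u`, only entries of `y` on `Z` or on vertices forced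
before `u`. So if `A y = c` and `y` vanishes on `Z`, each update of the forcing algorithm
recovers `y_u` exactly; the theorem is this applied to `y = x - x'`.
-/

open Matrix

section ForcingCorrectness

variable {F : Type*} [Field F] {n : ℕ}

theorem forcingStep_indicator {A : Matrix (Fin n) (Fin n) F} {par : Fin n → Fin n}
    {c y : Fin n → F} (hAy : A *ᵥ y = c) {s : Set (Fin n)} {u : Fin n} (hu : u ∉ s)
    (hpu : A (par u) u ≠ 0) (hrow : ∀ w, w ≠ u → A (par u) w ≠ 0 → w ∉ s → y w = 0) :
    forcingStep A par c (s.indicator y) u = (insert u s).indicator y := by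
  have hterm : ∀ w, A (par u) w * s.indicator y w =
      A (par u) w * (y - Pi.single u (y u) : Fin n → F) w := by
    intro w
    by_cases hwu : w = u
    · subst hwu; simp [hu]
    by_cases hw : w ∈ s
    · simp [hw, hwu]
    by_cases hA : A (par u) w = 0
    · simp [hA]
    · simp [hw, hwu, hrow w hwu hA hw]
  have hdot : A (par u) ⬝ᵥ s.indicator y = c (par u) - A (par u) u * y u :=
    calc A (par u) ⬝ᵥ s.indicator y = A (par u) ⬝ᵥ (y - Pi.single u (y u)) :=
          Finset.sum_congr rfl fun w _ => hterm w
      _ = c (par u) - A (par u) u * y u := by rw [dotProduct_sub, dotProduct_single, ← hAy]; rfl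
  ext v
  rcases eq_or_ne v u with rfl | hvu
  · simp [forcingStep, hdot, hpu]
  · have hins : v ∈ insert u s ↔ v ∈ s := or_iff_right hvu
    by_cases hv : v ∈ s
    · simp [forcingStep, hvu, hv, hins.2 hv]
    · simp [forcingStep, hvu, hv, mt hins.1 hv]

namespace ForcingOrder

variable {A : Matrix (Fin n) (Fin n) F} {Z : Finset (Fin n)} (fo : ForcingOrder A Z)

theorem mem_or_idxOf_lt_of_par_row_ne_zero {u w : Fin n} (hu : u ∈ fo.π) (hwu : w ≠ u)
    (hA : A (fo.par u) w ≠ 0) : w ∈ Z ∨ (w ∈ fo.π ∧ fo.π.idxOf w < fo.π.idxOf u) := by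
  by_cases hw : w = fo.par u
  · subst hw; exact fo.par_blue u hu
  · exact fo.others_blue u hu w hw hwu hA

theorem foldl_take_forcingStep {c y : Fin n → F} (hAy : A *ᵥ y = c) (hyZ : ∀ i ∈ Z, y i = 0)
    (k : ℕ) :
    (fo.π.take k).foldl (forcingStep A fo.par c) 0 = {v | v ∈ fo.π.take k}.indicator y := by
  induction k with
  | zero => simp [Pi.zero_def]
  | succ k ih =>
    rw [List.take_add_one]
    rcases hku : fo.π[k]? with _ | u
    · simpa using ih
    obtain ⟨hk, rfl⟩ := List.getElem?_eq_some_iff.1 hku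
    have hidx : fo.π.idxOf fo.π[k] = k := fo.nodup.idxOf_getElem k hk
    have hmem_take : ∀ w ∈ fo.π, w ∈ fo.π.take k ↔ fo.π.idxOf w < k :=
      fun w hw => List.mem_take_iff_idxOf_lt hw
    have hmem := List.getElem_mem hk
    have hinsert :
        {v | v ∈ fo.π.take k ++ [fo.π[k]]} = insert fo.π[k] {v | v ∈ fo.π.take k} := by
      ext v
      simp only [Set.mem_ofPred_eq, List.mem_append, List.mem_singleton, Set.mem_insert_iff,
        or_comm]
    rw [List.foldl_append, ih, Option.toList_some, List.foldl_cons, List.foldl_nil, hinsert]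
    refine forcingStep_indicator hAy (fun h => ?_) (fo.par_edge _ hmem) fun w hwu hA hw => ?_
    · exact absurd ((hmem_take _ hmem).1 h) (by omega)
    rcases fo.mem_or_idxOf_lt_of_par_row_ne_zero hmem hwu hA with hwZ | ⟨hwπ, hlt⟩
    · exact hyZ w hwZ
    · exact absurd ((hmem_take w hwπ).2 (hidx ▸ hlt)) hw

theorem forcing_eq_of_mulVec_eq {c y : Fin n → F} (hAy : A *ᵥ y = c)
    (hyZ : ∀ i ∈ Z, y i = 0) : Forcing A fo c = y := by
  have hfold := fo.foldl_take_forcingStep hAy hyZ fo.π.length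
  rw [List.take_length] at hfold
  rw [Forcing, hfold, Set.indicator_eq_self]
  exact fun v hv => (fo.mem_iff v).2 fun hvZ => hv (hyZ v hvZ)

end ForcingOrder

end ForcingCorrectness

theorem stmt4_general {F : Type*} [Field F] {n : ℕ} (A : Matrix (Fin n) (Fin n) F)
    (Z : Finset (Fin n))
    (fo : ForcingOrder A Z) (b : Fin n → F)
    (x' : Fin n → F)
    (x : Fin n → F) (hx : A.mulVec x = b) (hagree : ∀ i ∈ Z, x i = x' i) :
    x = Forcing A fo (b - A.mulVec x') + x' := by
  have hAy : A *ᵥ (x - x') = b - A *ᵥ x' := by rw [mulVec_sub, hx]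
  rw [fo.forcing_eq_of_mulVec_eq hAy fun i hi => sub_eq_zero.2 (hagree i hi), sub_add_cancel]

/-- if `supp(x') ⊆ Z` and `A x = b` for some `x` with `x_Z = x'_Z`,
then `x = Forcing(A, Z, b − A x') + x'`. -/
theorem stmt4 {F : Type*} [Field F] {n : ℕ} (A : Matrix (Fin n) (Fin n) F)
    (Z : Finset (Fin n)) (hZ : IsZeroForcingSet (adjOf A) ↑Z)
    (fo : ForcingOrder A Z) (b : Fin n → F)
    (x' : Fin n → F) (hsupp : ∀ i ∉ Z, x' i = 0)
    (x : Fin n → F) (hx : A.mulVec x = b) (hagree : ∀ i ∈ Z, x i = x' i) :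
    x = Forcing A fo (b - A.mulVec x') + x' :=
  stmt4_general A Z fo b x' x hx hagree
end

section
/- Fix A ∈ F^{n×n}, a zero forcing set Z of A, and a forcing order. Define L : F^n → F^n by L(b) = Forcing(A, Z, b). Then L is a linear map. -/
open Matrix

/-! Each forcing update is jointly linear in the right-hand side `b` and the current iterate `x`,
so the fold over the forcing order is jointly linear too; starting it at `x = 0` leaves a map
that is linear in `b`. -/

section ForcingLinear

variable {F : Type*} [Field F] {n : ℕ} (A : Matrix (Fin n) (Fin n) F) (par : Fin n → Fin n)

lemma forcingStep_add (b b' x x' : Fin n → F) (u : Fin n) :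
    forcingStep A par (b + b') (x + x') u =
      forcingStep A par b x u + forcingStep A par b' x' u := by
  rw [forcingStep, forcingStep, forcingStep, ← Function.update_add, dotProduct_add, Pi.add_apply,
    add_sub_add_comm, add_div]

lemma forcingStep_smul (c : F) (b x : Fin n → F) (u : Fin n) :
    forcingStep A par (c • b) (c • x) u = c • forcingStep A par b x u := by
  rw [forcingStep, forcingStep, ← Function.update_smul, dotProduct_smul, Pi.smul_apply,
    smul_eq_mul, smul_eq_mul, ← mul_sub, mul_div_assoc, smul_eq_mul]

lemma foldl_forcingStep_add (b b' : Fin n → F) (l : List (Fin n)) (x x' : Fin n → F) :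
    l.foldl (forcingStep A par (b + b')) (x + x') =
      l.foldl (forcingStep A par b) x + l.foldl (forcingStep A par b') x' := by
  induction l generalizing x x' with
  | nil => rfl
  | cons u l ih => simp only [List.foldl_cons, forcingStep_add, ih]

lemma foldl_forcingStep_smul (c : F) (b : Fin n → F) (l : List (Fin n)) (x : Fin n → F) :
    l.foldl (forcingStep A par (c • b)) (c • x) = c • l.foldl (forcingStep A par b) x := by
  induction l generalizing x with
  | nil => rfl
  | cons u l ih => simp only [List.foldl_cons, forcingStep_smul, ih]

end ForcingLinear

theorem stmt5_general {F : Type*} [Field F] {n : ℕ} (A : Matrix (Fin n) (Fin n) F)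
    (Z : Finset (Fin n))
    (fo : ForcingOrder A Z) :
    IsLinearMap F (fun b => Forcing A fo b) := by
  refine ⟨fun b b' => ?_, fun c b => ?_⟩
  · simpa only [Forcing, add_zero] using foldl_forcingStep_add A fo.par b b' fo.π 0 0
  · simpa only [Forcing, smul_zero] using foldl_forcingStep_smul A fo.par c b fo.π 0

/-- `L(b) = Forcing(A, Z, b)` is a linear map. -/
theorem stmt5 {F : Type*} [Field F] {n : ℕ} (A : Matrix (Fin n) (Fin n) F)
    (Z : Finset (Fin n)) (hZ : IsZeroForcingSet (adjOf A) ↑Z)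
    (fo : ForcingOrder A Z) :
    IsLinearMap F (fun b => Forcing A fo b) :=
  stmt5_general A Z fo
end

section
/- Let A ∈ F^{n×n} be written in block column form A = [A'_1 A'_2 A''] where A'' consists of the columns outside the zero forcing set, rank([A'_1 A'']) = rank(A), and rank(A'_1) = rank(A) − (number of columns of A''). Let M ∈ F^{k×n} be such that every column of A'' lies in ker(M) and rank(M A'_1) = rank(A'_1). Suppose Ax = b has a solution. Then for any y ∈ F^k with M A' y = M b (where A' = [A'_1 A'_2]), there exists x ∈ F^n with Ax = b whose first k coordinates equal y. -/
open Matrix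

/-! The columns of `A''` are killed by `M`, while `M A₁` has full column rank; so once
`b - A' y` is written in the column space of `A` — which the rank hypothesis identifies with
that of `[A₁ A'']` — its `A₁`-component vanishes, and the `A''`-component completes `y` to
a solution. -/

namespace Matrix

variable {m n₁ n₂ n₃ : Type*} [Fintype n₁] [Fintype n₂] [Fintype n₃]

theorem mulVec_injective_of_rank_eq_card {n F : Type*} [Field F] [Fintype n] {B : Matrix m n F}
    (h : B.rank = Fintype.card n) : Function.Injective B.mulVec :=
  mulVec_injective_iff.mpr <| linearIndependent_iff_card_eq_finrank_span.mpr <| by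
    rw [← h, rank_eq_finrank_span_cols, Set.finrank]

theorem range_mulVecLin_fromCols_le_fromCols_fromCols {R : Type*} [CommSemiring R]
    (B : Matrix m n₁ R) (C : Matrix m n₂ R) (D : Matrix m n₃ R) :
    LinearMap.range (fromCols B D).mulVecLin
      ≤ LinearMap.range (fromCols (fromCols B C) D).mulVecLin := by
  rintro _ ⟨v, rfl⟩
  exact ⟨Sum.elim (Sum.elim (v ∘ Sum.inl) 0) (v ∘ Sum.inr), by simp [fromCols_mulVec]⟩

theorem range_mulVecLin_fromCols_eq_of_rank_eq {F : Type*} [Field F] [Finite m]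
    {B : Matrix m n₁ F} {C : Matrix m n₂ F} {D : Matrix m n₃ F}
    (h : (fromCols B D).rank = (fromCols (fromCols B C) D).rank) :
    LinearMap.range (fromCols B D).mulVecLin
      = LinearMap.range (fromCols (fromCols B C) D).mulVecLin :=
  Submodule.eq_of_le_of_finrank_eq (range_mulVecLin_fromCols_le_fromCols_fromCols B C D) h

end Matrix

theorem stmt9_general {F : Type*} [Field F] {n k p q : ℕ}
    (A1 : Matrix (Fin n) (Fin p) F) (A2 : Matrix (Fin n) (Fin q) F)
    (A'' : Matrix (Fin n) (Fin (n - k)) F)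
    (M : Matrix (Fin k) (Fin n) F) (b : Fin n → F)
    (hrank1 : (Matrix.fromCols A1 A'').rank
        = (Matrix.fromCols (Matrix.fromCols A1 A2) A'').rank)
    (hp : A1.rank = p)
    (hker : M * A'' = 0)
    (hMrank : (M * A1).rank = A1.rank)
    (hsol : ∃ x, (Matrix.fromCols (Matrix.fromCols A1 A2) A'').mulVec x = b)
    (y : Fin p ⊕ Fin q → F)
    (hy : (M * Matrix.fromCols A1 A2).mulVec y = M.mulVec b) :
    ∃ x : (Fin p ⊕ Fin q) ⊕ Fin (n - k) → F,
      (Matrix.fromCols (Matrix.fromCols A1 A2) A'').mulVec x = b ∧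
      ∀ j, x (Sum.inl j) = y j := by
  obtain ⟨x₀, rfl⟩ := hsol
  obtain ⟨v, hv⟩ : fromCols (fromCols A1 A2) A'' *ᵥ x₀ - fromCols A1 A2 *ᵥ y
      ∈ LinearMap.range (fromCols A1 A'').mulVecLin := by
    rw [range_mulVecLin_fromCols_eq_of_rank_eq hrank1]
    exact ⟨x₀ - Sum.elim y 0, by simp [mulVec_sub]⟩
  rw [mulVecLin_apply, fromCols_mulVec, eq_sub_iff_add_eq'] at hv
  have hv₁ : v ∘ Sum.inl = 0 := by
    refine mulVec_injective_of_rank_eq_card (by rw [hMrank, hp, Fintype.card_fin]) ?_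
    have hMv := congrArg (M *ᵥ ·) hv
    simp only [mulVec_add, mulVec_mulVec, hker, zero_mulVec, add_zero] at hMv hy
    rw [hy, add_eq_left] at hMv
    rwa [mulVec_zero]
  refine ⟨Sum.elim y (v ∘ Sum.inr), ?_, fun _ => rfl⟩
  rwa [hv₁, mulVec_zero, zero_add, ← fromCols_mulVec_sumElim] at hv

/-- the core-lifting theorem for block matrices.  With
`A = [A₁ A₂ A'']` where `A''` has `n − k` columns, `rank [A₁ A''] = rank A`,
`rank A₁ = p` where `rank A = p + (n − k)`, and `M ∈ F^{k×n}` kills the columns of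
`A''` and preserves the rank of `A₁`: if `A x = b` is solvable and `M A' y = M b`
(with `A' = [A₁ A₂]`), then some solution `x` of `A x = b` restricts to `y` on the
first `k` coordinates. -/
theorem stmt9 {F : Type*} [Field F] {n k p q : ℕ} (hk : k ≤ n) (hpq : p + q = k)
    (A1 : Matrix (Fin n) (Fin p) F) (A2 : Matrix (Fin n) (Fin q) F)
    (A'' : Matrix (Fin n) (Fin (n - k)) F)
    (M : Matrix (Fin k) (Fin n) F) (b : Fin n → F)
    (hrank1 : (Matrix.fromCols A1 A'').rank
        = (Matrix.fromCols (Matrix.fromCols A1 A2) A'').rank)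
    (hp : A1.rank = p)
    (hrank2 : (Matrix.fromCols (Matrix.fromCols A1 A2) A'').rank = p + (n - k))
    (hker : M * A'' = 0)
    (hMrank : (M * A1).rank = A1.rank)
    (hsol : ∃ x, (Matrix.fromCols (Matrix.fromCols A1 A2) A'').mulVec x = b)
    (y : Fin p ⊕ Fin q → F)
    (hy : (M * Matrix.fromCols A1 A2).mulVec y = M.mulVec b) :
    ∃ x : (Fin p ⊕ Fin q) ⊕ Fin (n - k) → F,
      (Matrix.fromCols (Matrix.fromCols A1 A2) A'').mulVec x = b ∧
      ∀ j, x (Sum.inl j) = y j :=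
  stmt9_general A1 A2 A'' M b hrank1 hp hker hMrank hsol y hy
end

section
/- Let Z be a zero forcing set of A ∈ F^{n×n}, and let R(b) = b − A·Forcing(A,Z,b), a linear map. Let A'_1 be a set of columns of A indexed by a subset of Z such that together with the columns outside Z they form a basis-extension of full column rank spanning the column space of A (i.e., rank([A'_1 A'']) = rank(A) and rank(A'_1) = rank(A) − (n − |Z|), where A'' consists of columns outside Z). Then rank(R A'_1) = rank(A'_1). -/
open Matrix

/-!
`Forcing A fo b` is linear in `b` and vanishes on `Z`, so `R b - b = -A · Forcing b` lies in the
column space of `A''`. If `R b = 0`, then `b` itself lies there. The rank hypotheses say exactly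
that the column spaces of `A₁` and `A''` intersect trivially, so `R` is injective on the column
space of `A₁` and `rank (R A₁) = rank A₁`.
-/

theorem LinearMap.finrank_range_comp_of_disjoint {K V₁ V₂ V₃ : Type*} [Field K]
    [AddCommGroup V₁] [Module K V₁] [AddCommGroup V₂] [Module K V₂]
    [AddCommGroup V₃] [Module K V₃] (f : V₂ →ₗ[K] V₃) (g : V₁ →ₗ[K] V₂)
    (h : Disjoint (LinearMap.range g) (LinearMap.ker f)) :
    Module.finrank K (LinearMap.range (f ∘ₗ g)) = Module.finrank K (LinearMap.range g) := by
  rw [LinearMap.range_comp, ← LinearMap.range_domRestrict,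
    LinearMap.finrank_range_of_inj (LinearMap.injective_domRestrict_iff.mpr h)]

namespace Matrix

theorem range_mulVecLin_fromCols {R m n₁ n₂ : Type*} [CommSemiring R] [Fintype n₁]
    [Fintype n₂] (B : Matrix m n₁ R) (C : Matrix m n₂ R) :
    LinearMap.range (fromCols B C).mulVecLin
      = LinearMap.range B.mulVecLin ⊔ LinearMap.range C.mulVecLin := by
  simp only [range_mulVecLin, ← Submodule.span_union, ← Set.Sum.elim_range]
  congr 2
  ext (j | j) i <;> rfl

theorem disjoint_range_mulVecLin_of_rank_add_le_rank_fromCols {K m n₁ n₂ : Type*} [Field K]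
    [Fintype m] [Fintype n₁] [Fintype n₂] (B : Matrix m n₁ K) (C : Matrix m n₂ K)
    (h : B.rank + C.rank ≤ (fromCols B C).rank) :
    Disjoint (LinearMap.range B.mulVecLin) (LinearMap.range C.mulVecLin) := by
  have hsum := Submodule.finrank_sup_add_finrank_inf_eq
    (LinearMap.range B.mulVecLin) (LinearMap.range C.mulVecLin)
  rw [← range_mulVecLin_fromCols] at hsum
  rw [disjoint_iff, ← Submodule.finrank_eq_zero]
  unfold rank at h
  omega

theorem mulVec_mem_range_mulVecLin_of_eq_zero {R m ι : Type*} [CommSemiring R] [Fintype ι]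
    (A : Matrix m ι R) (p : ι → Prop) [DecidablePred p] {x : ι → R}
    (hx : ∀ j, ¬ p j → x j = 0) :
    A *ᵥ x ∈ LinearMap.range (of fun i (j : {j // p j}) => A i j).mulVecLin := by
  refine ⟨fun j => x j, funext fun i => ?_⟩
  change ∑ j : {j // p j}, A i j * x j = ∑ j, A i j * x j
  have hoff : ∑ j : {j // ¬ p j}, A i j * x j = 0 :=
    Fintype.sum_eq_zero _ fun j => by rw [hx j j.2, mul_zero]
  rw [← Fintype.sum_subtype_add_sum_subtype p, hoff, add_zero]

theorem mulVecLin_of_map_col {R m m' ι : Type*} [CommSemiring R] [Fintype m]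
    [Fintype ι] (f : (m → R) →ₗ[R] (m' → R)) (B : Matrix m ι R) :
    (of fun i j => f (fun i' => B i' j) i).mulVecLin = f ∘ₗ B.mulVecLin := by
  classical
  ext j i
  simp only [LinearMap.coe_comp, Function.comp_apply, LinearMap.coe_single,
    mulVecLin_apply, mulVec_single_one]
  rfl

end Matrix

section ForcingLinear

variable {F : Type*} [Field F] {n : ℕ} (A : Matrix (Fin n) (Fin n) F)

theorem forcingStep_smul_add (par : Fin n → Fin n) (c : F) (b b' x x' : Fin n → F) (u : Fin n) :
    forcingStep A par (c • b + b') (c • x + x') u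
      = c • forcingStep A par b x u + forcingStep A par b' x' u := by
  simp only [forcingStep, ← Function.update_smul, ← Function.update_add]
  congr 1
  simp only [Pi.add_apply, Pi.smul_apply, smul_eq_mul, dotProduct_add, dotProduct_smul]
  ring

theorem foldl_forcingStep_smul_add (par : Fin n → Fin n) (c : F) (b b' : Fin n → F)
    (l : List (Fin n)) (x x' : Fin n → F) :
    l.foldl (forcingStep A par (c • b + b')) (c • x + x')
      = c • l.foldl (forcingStep A par b) x + l.foldl (forcingStep A par b') x' := by
  induction l generalizing x x' with
  | nil => rfl
  | cons u l ih => simp only [List.foldl_cons, forcingStep_smul_add, ih]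

theorem foldl_forcingStep_apply_of_not_mem (par : Fin n → Fin n) (b : Fin n → F)
    {l : List (Fin n)} {v : Fin n} (hv : v ∉ l) (x : Fin n → F) :
    l.foldl (forcingStep A par b) x v = x v := by
  induction l generalizing x with
  | nil => rfl
  | cons u l ih =>
    rw [List.mem_cons, not_or] at hv
    rw [List.foldl_cons, ih hv.2, forcingStep, Function.update_of_ne hv.1]

variable {Z : Finset (Fin n)} (fo : ForcingOrder A Z)

theorem forcing_smul_add (c : F) (b b' : Fin n → F) :
    Forcing A fo (c • b + b') = c • Forcing A fo b + Forcing A fo b' := by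
  simpa only [Forcing, smul_zero, add_zero] using
    foldl_forcingStep_smul_add A fo.par c b b' fo.π 0 0

def forcingLinearMap : (Fin n → F) →ₗ[F] (Fin n → F) where
  toFun := Forcing A fo
  map_add' b b' := by simpa only [one_smul] using forcing_smul_add A fo 1 b b'
  map_smul' c b := by
    have hzero : Forcing A fo 0 = 0 := by
      simpa only [one_smul, add_zero, left_eq_add] using forcing_smul_add A fo 1 0 0
    simpa only [add_zero, hzero, RingHom.id_apply] using forcing_smul_add A fo c b 0

theorem forcing_apply_of_mem (b : Fin n → F) {v : Fin n} (hv : v ∈ Z) : Forcing A fo b v = 0 :=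
  foldl_forcingStep_apply_of_not_mem A fo.par b (fun h => (fo.mem_iff v).mp h hv) 0

def rmapLinearMap : (Fin n → F) →ₗ[F] (Fin n → F) :=
  LinearMap.id - A.mulVecLin ∘ₗ forcingLinearMap A fo

theorem rmapLinearMap_apply (b : Fin n → F) : rmapLinearMap A fo b = Rmap A fo b := rfl

theorem ker_rmapLinearMap_le :
    LinearMap.ker (rmapLinearMap A fo)
      ≤ LinearMap.range (of fun i (v : {v // v ∉ Z}) => A i v).mulVecLin := by
  intro b hb
  rw [LinearMap.mem_ker, rmapLinearMap_apply, Rmap, sub_eq_zero] at hb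
  rw [hb]
  exact mulVec_mem_range_mulVecLin_of_eq_zero A _ fun v hv =>
    forcing_apply_of_mem A fo b (not_not.mp hv)

end ForcingLinear

theorem stmt10_general {F : Type*} [Field F] {n : ℕ} (A : Matrix (Fin n) (Fin n) F)
    (Z : Finset (Fin n))
    (fo : ForcingOrder A Z)
    (P : Finset (Fin n))
    (A1 : Matrix (Fin n) {v // v ∈ P} F) (hA1 : A1 = Matrix.of fun i p => A i p.1)
    (A'' : Matrix (Fin n) {v : Fin n // v ∉ Z} F)
    (hA'' : A'' = Matrix.of fun i v => A i v.1)
    (hrank1 : (Matrix.fromCols A1 A'').rank = A.rank)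
    (hrank2 : A1.rank + (n - Z.card) = A.rank) :
    (Matrix.of fun i (p : {v // v ∈ P}) => Rmap A fo (fun i' => A i' p.1) i).rank
      = A1.rank := by
  have hwidth : A''.rank ≤ n - Z.card := by
    simpa only [Fintype.card_subtype_compl, Fintype.card_coe, Fintype.card_fin]
      using A''.rank_le_card_width
  have hdisj : Disjoint (LinearMap.range A1.mulVecLin) (LinearMap.range A''.mulVecLin) :=
    Matrix.disjoint_range_mulVecLin_of_rank_add_le_rank_fromCols A1 A'' (by omega)
  have hRA1 : (Matrix.of fun i (p : {v // v ∈ P}) => Rmap A fo (fun i' => A i' p.1) i)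
      = Matrix.of fun i p => rmapLinearMap A fo (fun i' => A1 i' p) i := by
    subst hA1; rfl
  subst hA''
  rw [hRA1, Matrix.rank, Matrix.rank, Matrix.mulVecLin_of_map_col]
  exact LinearMap.finrank_range_comp_of_disjoint _ _
    (hdisj.mono_right (ker_rmapLinearMap_le A fo))

/-- rank preservation under `R`.  If `A₁` consists of columns of `A`
indexed by `P ⊆ Z` with `rank [A₁ A''] = rank A` and `rank A₁ = rank A − (n − |Z|)`
(where `A''` consists of the columns outside `Z`), then `rank (R A₁) = rank A₁`. -/
theorem stmt10 {F : Type*} [Field F] {n : ℕ} (A : Matrix (Fin n) (Fin n) F)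
    (Z : Finset (Fin n)) (hZ : IsZeroForcingSet (adjOf A) ↑Z)
    (fo : ForcingOrder A Z)
    (P : Finset (Fin n)) (hP : P ⊆ Z)
    (A1 : Matrix (Fin n) {v // v ∈ P} F) (hA1 : A1 = Matrix.of fun i p => A i p.1)
    (A'' : Matrix (Fin n) {v : Fin n // v ∉ Z} F)
    (hA'' : A'' = Matrix.of fun i v => A i v.1)
    (hrank1 : (Matrix.fromCols A1 A'').rank = A.rank)
    (hrank2 : A1.rank + (n - Z.card) = A.rank) :
    (Matrix.of fun i (p : {v // v ∈ P}) => Rmap A fo (fun i' => A i' p.1) i).rank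
      = A1.rank :=
  stmt10_general A Z fo P A1 hA1 A'' hA'' hrank1 hrank2
end
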